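/- arXiv:2602.20697 — 6 statements merged into one kernel-verified Lean document; each statement's English description precedes it below -/
import Mathlib

section
/- For every 3×3 real matrix F with det F > 0 and every 3×3 real matrix L, the map t ↦ σ((I + tL)·F) is differentiable at t = 0, and its derivative σ̇ there satisfies the Truesdell-rate identity σ̇ = L·σ(F) + σ(F)·Lᵀ − tr(L)·σ(F) + D(F) : e, where e = (L + Lᵀ)/2 and (D(F) : e)_{ij} = Σ_{k,l} D(F)_{ijkl} e_{kl}. -/
/-!
Along `t ↦ (I + tL)F` Jacobi's formula gives `J̇ = tr(L) J` and `b = F Fᵀ` moves with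
`ḃ = L b + b Lᵀ`, so the chain rule expresses `σ̇` through `J̇` and `ḃ`. Contracting `D(F)` with
`e = (L + Lᵀ)/2`, and using `tr e = tr L` and `b : e = tr (L b)` (as `b` is symmetric), turns the
Truesdell expression into the same linear combination of `I`, `b`, `L b` and `b Lᵀ`.
-/

open Matrix

/-- Kronecker delta on `Fin 3`. -/
def kdelta (i j : Fin 3) : ℝ := if i = j then 1 else 0

/-- Neo-Hookean Cauchy stress `σ(F) = K(J−1)I + μ J^(−5/3) (b − tr(b)/3 · I)`,
with `J = det F`, `b = F Fᵀ`. -/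
noncomputable def nhSigma (K μ : ℝ) (F : Matrix (Fin 3) (Fin 3) ℝ) :
    Matrix (Fin 3) (Fin 3) ℝ :=
  (K * (F.det - 1)) • (1 : Matrix (Fin 3) (Fin 3) ℝ)
    + (μ * F.det ^ (-(5 : ℝ)/3)) •
        (F * Fᵀ - ((F * Fᵀ).trace / 3) • (1 : Matrix (Fin 3) (Fin 3) ℝ))

/-- Tangent stiffness tensor `D(F)` (Truesdell rate moduli of the neo-Hookean stress). -/
noncomputable def nhD (K μ : ℝ) (F : Matrix (Fin 3) (Fin 3) ℝ) (i j k l : Fin 3) : ℝ :=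
  K * (2 * F.det - 1) * kdelta i j * kdelta k l
    - K * (F.det - 1) * (kdelta i k * kdelta l j + kdelta i l * kdelta j k)
    + μ * F.det ^ (-(5 : ℝ)/3) *
        ((2/9) * (F * Fᵀ).trace * kdelta i j * kdelta k l
          - (2/3) * ((F * Fᵀ) i j * kdelta k l + kdelta i j * (F * Fᵀ) k l)
          + (1/3) * (F * Fᵀ).trace * (kdelta i k * kdelta l j + kdelta i l * kdelta j k))

attribute [local instance] Matrix.normedAddCommGroup Matrix.normedSpace

theorem Matrix.hasDerivAt_det_one_add_smul {𝕜 n : Type*} [NontriviallyNormedField 𝕜]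
    [Fintype n] [DecidableEq n] (L : Matrix n n 𝕜) :
    HasDerivAt (fun t : 𝕜 => (1 + t • L).det) L.trace 0 := by
  set P := (1 + (Polynomial.X : Polynomial 𝕜) • L.map Polynomial.C).det.divX.divX
  rw [funext fun t : 𝕜 => Matrix.det_one_add_smul t L]
  have hquad : HasDerivAt (fun t : 𝕜 => P.eval t * t ^ 2) 0 0 := by
    simpa using (P.hasDerivAt 0).fun_mul (hasDerivAt_pow 2 (0 : 𝕜))
  simpa using (((hasDerivAt_id (0 : 𝕜)).const_mul L.trace).const_add 1).fun_add hquad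

theorem hasDerivAt_add_smul_add_sq_smul {𝕜 E : Type*} [NontriviallyNormedField 𝕜]
    [NormedAddCommGroup E] [NormedSpace 𝕜 E] (A B C : E) :
    HasDerivAt (fun t : 𝕜 => A + t • B + t ^ 2 • C) B 0 := by
  simpa using (((hasDerivAt_id (0 : 𝕜)).smul_const B).const_add A).fun_add
    ((hasDerivAt_pow 2 (0 : 𝕜)).smul_const C)

theorem Matrix.hasDerivAt_one_add_smul_mul_mul_transpose {𝕜 n : Type*}
    [NontriviallyNormedField 𝕜] [Fintype n] [DecidableEq n] (L F : Matrix n n 𝕜) :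
    HasDerivAt (fun t : 𝕜 => (1 + t • L) * F * ((1 + t • L) * F)ᵀ)
      (L * (F * Fᵀ) + F * Fᵀ * Lᵀ) 0 := by
  have hexpand : ∀ t : 𝕜, (1 + t • L) * F * ((1 + t • L) * F)ᵀ
      = F * Fᵀ + t • (L * (F * Fᵀ) + F * Fᵀ * Lᵀ) + t ^ 2 • (L * F * (L * F)ᵀ) := by
    intro t
    simp only [add_mul, one_mul, smul_mul_assoc, transpose_add, transpose_smul, mul_add,
      mul_smul_comm, smul_add, smul_smul, transpose_mul, Matrix.mul_assoc, sq]
    abel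
  rw [funext hexpand]
  exact hasDerivAt_add_smul_add_sq_smul (F * Fᵀ) _ (L * F * (L * F)ᵀ)

theorem HasDerivAt.matrix_trace {𝕜 n : Type*} [NontriviallyNormedField 𝕜] [CompleteSpace 𝕜]
    [Fintype n] {B : 𝕜 → Matrix n n 𝕜} {B' : Matrix n n 𝕜} {t₀ : 𝕜} (hB : HasDerivAt B B' t₀) :
    HasDerivAt (fun t => (B t).trace) B'.trace t₀ :=
  (Matrix.traceLinearMap n 𝕜 𝕜).toContinuousLinearMap.hasFDerivAt.comp_hasDerivAt t₀ hB

theorem hasDerivAt_nhSigma (K μ : ℝ) {G : ℝ → Matrix (Fin 3) (Fin 3) ℝ} {J' t₀ : ℝ}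
    {B' : Matrix (Fin 3) (Fin 3) ℝ} (hJ : HasDerivAt (fun t => (G t).det) J' t₀)
    (hB : HasDerivAt (fun t => G t * (G t)ᵀ) B' t₀) (hpos : 0 < (G t₀).det) :
    HasDerivAt (fun t => nhSigma K μ (G t))
      ((K * J') • 1
        + (μ * (G t₀).det ^ (-(5 : ℝ)/3)) • (B' - (B'.trace / 3) • 1)
        + (μ * (-(5 : ℝ)/3 * (J' / (G t₀).det) * (G t₀).det ^ (-(5 : ℝ)/3))) •
            (G t₀ * (G t₀)ᵀ - ((G t₀ * (G t₀)ᵀ).trace / 3) • 1)) t₀ := by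
  have hpow : HasDerivAt (fun t => (G t).det ^ (-(5 : ℝ)/3))
      (-(5 : ℝ)/3 * (J' / (G t₀).det) * (G t₀).det ^ (-(5 : ℝ)/3)) t₀ := by
    convert hJ.rpow_const (p := -(5 : ℝ)/3) (Or.inl hpos.ne') using 1
    rw [Real.rpow_sub_one hpos.ne']
    ring
  have hdev : HasDerivAt (fun t => G t * (G t)ᵀ - ((G t * (G t)ᵀ).trace / 3) • 1)
      (B' - (B'.trace / 3) • 1) t₀ :=
    hB.fun_sub ((hB.matrix_trace.div_const 3).smul_const 1)
  unfold nhSigma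
  rw [add_assoc]
  exact (((hJ.sub_const 1).const_mul K).smul_const 1).fun_add ((hpow.const_mul μ).fun_smul hdev)

theorem nhD_contract (K μ : ℝ) (F e : Matrix (Fin 3) (Fin 3) ℝ) :
    (Matrix.of fun i j => ∑ k, ∑ l, nhD K μ F i j k l * e k l)
      = (K * (2 * F.det - 1) * e.trace) • 1 - (K * (F.det - 1)) • (e + eᵀ)
        + (μ * F.det ^ (-(5 : ℝ)/3)) •
            ((2/9 * (F * Fᵀ).trace * e.trace) • 1
              - (2/3 : ℝ) • (e.trace • (F * Fᵀ) + ((F * Fᵀ)ᵀ * e).trace • 1)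
              + (1/3 * (F * Fᵀ).trace) • (e + eᵀ)) := by
  ext i j
  simp only [nhD]
  generalize F * Fᵀ = b
  simp only [kdelta, of_apply, Matrix.add_apply, Matrix.sub_apply, Matrix.smul_apply,
    one_apply, transpose_apply, smul_eq_mul, trace, diag_apply, mul_apply]
  simp only [add_mul, sub_mul, mul_add, mul_sub, Finset.sum_add_distrib, Finset.sum_sub_distrib,
    mul_ite, ite_mul, mul_one, one_mul, mul_zero, zero_mul, Finset.sum_ite_eq, Finset.sum_ite_eq',
    Finset.mem_univ, if_true, Finset.sum_ite_irrel, Finset.sum_const_zero, ← Finset.mul_sum]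
  have hfrob : ∑ k, ∑ l, b l k * e l k = ∑ k, ∑ l, b k l * e k l := Finset.sum_comm
  split_ifs
  · simp only [hfrob, mul_assoc, ← Finset.mul_sum]
    ring
  · ring

theorem truesdell_rate_eq (K μ : ℝ) (F L : Matrix (Fin 3) (Fin 3) ℝ) :
    L * nhSigma K μ F + nhSigma K μ F * Lᵀ - L.trace • nhSigma K μ F
        + Matrix.of (fun i j => ∑ k, ∑ l, nhD K μ F i j k l * (((1 : ℝ)/2) • (L + Lᵀ)) k l)
      = (K * (L.trace * F.det)) • 1
        + (μ * F.det ^ (-(5 : ℝ)/3)) •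
            ((L * (F * Fᵀ) + F * Fᵀ * Lᵀ) - ((L * (F * Fᵀ) + F * Fᵀ * Lᵀ).trace / 3) • 1)
        + (μ * (-(5 : ℝ)/3 * L.trace * F.det ^ (-(5 : ℝ)/3))) •
            (F * Fᵀ - ((F * Fᵀ).trace / 3) • 1) := by
  rw [nhD_contract, nhSigma]
  set b := F * Fᵀ
  set e := ((1 : ℝ)/2) • (L + Lᵀ)
  have hbT : bᵀ = b := by rw [transpose_mul, transpose_transpose]
  have he_trace : e.trace = L.trace := by
    rw [trace_smul, trace_add, trace_transpose, smul_eq_mul]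
    ring
  have he_symm : e + eᵀ = L + Lᵀ := by
    rw [transpose_smul, transpose_add, transpose_transpose]
    module
  have hbLT : (b * Lᵀ).trace = (L * b).trace := by
    rw [← trace_transpose, transpose_mul, transpose_transpose, hbT]
  have hbe : (bᵀ * e).trace = (L * b).trace := by
    rw [hbT, Matrix.mul_smul, trace_smul, Matrix.mul_add, trace_add, hbLT, trace_mul_comm b L,
      smul_eq_mul]
    ring
  have hB' : (L * b + b * Lᵀ).trace = 2 * (L * b).trace := by
    rw [trace_add, hbLT]
    ring
  rw [he_trace, he_symm, hbe, hB']
  simp only [Matrix.mul_add, Matrix.add_mul, Matrix.mul_sub, Matrix.sub_mul, Matrix.mul_smul,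
    Matrix.smul_mul, Matrix.mul_one, Matrix.one_mul]
  module

/-- the map `t ↦ σ((I + tL)·F)` is differentiable at `t = 0` and its
derivative there equals `L·σ + σ·Lᵀ − tr(L)·σ + D(F) : e` with `e = (L + Lᵀ)/2`. -/
theorem nhSigma_truesdell_rate (K μ : ℝ) (F L : Matrix (Fin 3) (Fin 3) ℝ)
    (hF : 0 < F.det) :
    HasDerivAt (fun t : ℝ => nhSigma K μ ((1 + t • L) * F))
      (L * nhSigma K μ F + nhSigma K μ F * Lᵀ - L.trace • nhSigma K μ F
        + Matrix.of fun i j =>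
            ∑ k, ∑ l, nhD K μ F i j k l * (((1 : ℝ)/2) • (L + Lᵀ)) k l) 0 := by
  have hdet : HasDerivAt (fun t : ℝ => ((1 + t • L) * F).det) (L.trace * F.det) 0 := by
    simpa only [det_mul] using (Matrix.hasDerivAt_det_one_add_smul L).mul_const F.det
  have hrate := hasDerivAt_nhSigma K μ hdet (Matrix.hasDerivAt_one_add_smul_mul_mul_transpose L F)
    (by simpa using hF)
  simp only [zero_smul, add_zero, one_mul, mul_div_cancel_right₀ _ hF.ne'] at hrate
  rwa [truesdell_rate_eq]
end

section
/- For every 3×3 real matrix F with det F > 0, the neo-Hookean Cauchy stress σ(F) is a symmetric matrix, and the incremental tangent tensor A(F) defined by A(F)_{ijkl} = D(F)_{ijkl} + σ(F)_{jl}·δ_{ik} possesses the major symmetry A(F)_{ijkl} = A(F)_{klij} for all indices i, j, k, l. -/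
open Matrix

/-- the neo-Hookean Cauchy stress is symmetric and the incremental
tangent tensor `A_{ijkl} = D_{ijkl} + σ_{jl} δ_{ik}` has the major symmetry
`A_{ijkl} = A_{klij}`. -/
theorem nhA_major_symmetry (K μ : ℝ) (F : Matrix (Fin 3) (Fin 3) ℝ) (hF : 0 < F.det) :
    (nhSigma K μ F).IsSymm ∧
    ∀ i j k l : Fin 3,
      nhD K μ F i j k l + nhSigma K μ F j l * kdelta i k =
      nhD K μ F k l i j + nhSigma K μ F l j * kdelta k i := by

  have hb : (F * Fᵀ)ᵀ = F * Fᵀ := by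
    rw [Matrix.transpose_mul, Matrix.transpose_transpose]
  have hs : (nhSigma K μ F).IsSymm := by
    unfold Matrix.IsSymm nhSigma
    rw [Matrix.transpose_add, Matrix.transpose_smul, Matrix.transpose_smul,
      Matrix.transpose_sub, hb, Matrix.transpose_smul, Matrix.transpose_one]
  refine ⟨hs, ?_⟩
  intro i j k l
  have kd : ∀ a b : Fin 3, kdelta a b = kdelta b a := fun a b => by
    simp [kdelta, eq_comm]
  have h1 : nhSigma K μ F l j = nhSigma K μ F j l := hs.apply j l
  have hd : nhD K μ F i j k l = nhD K μ F k l i j := by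
    simp only [nhD, kd i k, kd l j, kd i l, kd j k]
    ring
  rw [hd, h1, kd k i]
end

section
/- For every 3×3 real matrix F with det F > 0 and every special orthogonal 3×3 matrix Q (QᵀQ = I, det Q = 1), the tangent stiffness tensor transforms objectively under rotation: D(Q·F)_{ijkl} = Σ_{p,q,r,s} Q_{ip} Q_{jq} Q_{kr} Q_{ls} D(F)_{pqrs} for all indices i, j, k, l. -/
set_option maxHeartbeats 2000000


open Matrix

/-- objectivity of the tangent stiffness tensor under rotations:
`D(Q·F)_{ijkl} = Q_{ip} Q_{jq} Q_{kr} Q_{ls} D(F)_{pqrs}`. -/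
theorem nhD_objective (K μ : ℝ) (F Q : Matrix (Fin 3) (Fin 3) ℝ)
    (hF : 0 < F.det) (hQ : Qᵀ * Q = 1) (hQdet : Q.det = 1) (i j k l : Fin 3) :
    nhD K μ (Q * F) i j k l =
      ∑ p, ∑ q, ∑ r, ∑ s, Q i p * Q j q * Q k r * Q l s * nhD K μ F p q r s := by
  have hQQT : Q * Qᵀ = 1 := mul_eq_one_comm.mp hQ
  have h1 : ∀ a c : Fin 3, kdelta a c = ∑ p, Q a p * Q c p := by
    intro a c
    calc kdelta a c = (1 : Matrix (Fin 3) (Fin 3) ℝ) a c := by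
          simp [kdelta, Matrix.one_apply]
      _ = (Q * Qᵀ) a c := by rw [hQQT]
      _ = ∑ p, Q a p * Q c p := by simp [Matrix.mul_apply]
  have hdet : (Q * F).det = F.det := by rw [Matrix.det_mul, hQdet, one_mul]
  have hb : (Q * F) * (Q * F)ᵀ = Q * (F * Fᵀ) * Qᵀ := by
    rw [Matrix.transpose_mul]
    simp [Matrix.mul_assoc]
  have htr : ((Q * F) * (Q * F)ᵀ).trace = (F * Fᵀ).trace := by
    rw [hb, Matrix.trace_mul_cycle, hQ, one_mul]
  simp only [nhD]
  rw [hdet, htr, hb]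
  generalize F * Fᵀ = B
  rw [h1 i j, h1 k l, h1 i k, h1 l j, h1 i l, h1 j k]
  simp only [Matrix.mul_apply, Matrix.transpose_apply, Fin.sum_univ_three, kdelta,
    Fin.isValue, Fin.reduceEq, reduceIte,
    if_true, if_false, mul_one, mul_zero, zero_mul, one_mul, add_zero, zero_add]
  ring
end

section
/- For every 3×3 real matrix F with det F > 0 and every special orthogonal 3×3 matrix Q (QᵀQ = I, det Q = 1), the incremental tangent tensor A(F)_{ijkl} = D(F)_{ijkl} + σ(F)_{jl}·δ_{ik} transforms objectively under rotation: A(Q·F)_{ijkl} = Σ_{p,q,r,s} Q_{ip} Q_{jq} Q_{kr} Q_{ls} A(F)_{pqrs}, and likewise σ(Q·F)_{kl} = Σ_{p,q} Q_{kp} Q_{lq} σ(F)_{pq}, for all indices. -/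
open Matrix

/-- Entrywise formula for the neo-Hookean stress. -/
lemma nhSigma_apply (K μ : ℝ) (G : Matrix (Fin 3) (Fin 3) ℝ) (i j : Fin 3) :
    nhSigma K μ G i j = K * (G.det - 1) * kdelta i j
      + μ * G.det ^ (-(5:ℝ)/3) * ((G * Gᵀ) i j - (G * Gᵀ).trace / 3 * kdelta i j) := by
  simp [nhSigma, Matrix.add_apply, Matrix.smul_apply, Matrix.sub_apply, Matrix.one_apply,
    kdelta, smul_eq_mul]

section Contractions

variable (Q G : Matrix (Fin 3) (Fin 3) ℝ)
  (hdelta : ∀ i j : Fin 3, kdelta i j = ∑ p, Q i p * Q j p)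

include hdelta in
lemma nh_L1 (c : ℝ) (i j k l : Fin 3) :
    ∑ p, ∑ q, ∑ r, ∑ s, Q i p * Q j q * Q k r * Q l s * (c * (kdelta p q * kdelta r s))
      = c * (kdelta i j * kdelta k l) := by
  rw [hdelta i j, hdelta k l]
  simp only [Fin.sum_univ_three, kdelta, Fin.ext_iff]
  norm_num
  ring

include hdelta in
lemma nh_L2 (c : ℝ) (i j k l : Fin 3) :
    ∑ p, ∑ q, ∑ r, ∑ s, Q i p * Q j q * Q k r * Q l s * (c * (kdelta p r * kdelta s q))
      = c * (kdelta i k * kdelta l j) := by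
  rw [hdelta i k, hdelta l j]
  simp only [Fin.sum_univ_three, kdelta, Fin.ext_iff]
  norm_num
  ring

include hdelta in
lemma nh_L3 (c : ℝ) (i j k l : Fin 3) :
    ∑ p, ∑ q, ∑ r, ∑ s, Q i p * Q j q * Q k r * Q l s * (c * (kdelta p s * kdelta q r))
      = c * (kdelta i l * kdelta j k) := by
  rw [hdelta i l, hdelta j k]
  simp only [Fin.sum_univ_three, kdelta, Fin.ext_iff]
  norm_num
  ring

include hdelta in
lemma nh_L6 (c : ℝ) (i j k l : Fin 3) :
    ∑ p, ∑ q, ∑ r, ∑ s, Q i p * Q j q * Q k r * Q l s * (c * (kdelta q s * kdelta p r))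
      = c * (kdelta j l * kdelta i k) := by
  rw [hdelta j l, hdelta i k]
  simp only [Fin.sum_univ_three, kdelta, Fin.ext_iff]
  norm_num
  ring

include hdelta in
lemma nh_L4 (c : ℝ) (i j k l : Fin 3) :
    ∑ p, ∑ q, ∑ r, ∑ s, Q i p * Q j q * Q k r * Q l s * (c * (G p q * kdelta r s))
      = c * ((∑ p, ∑ q, Q i p * Q j q * G p q) * kdelta k l) := by
  rw [hdelta k l]
  simp only [Fin.sum_univ_three, kdelta, Fin.ext_iff]
  norm_num
  ring

include hdelta in
lemma nh_L5 (c : ℝ) (i j k l : Fin 3) :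
    ∑ p, ∑ q, ∑ r, ∑ s, Q i p * Q j q * Q k r * Q l s * (c * (kdelta p q * G r s))
      = c * (kdelta i j * (∑ p, ∑ q, Q k p * Q l q * G p q)) := by
  rw [hdelta i j]
  simp only [Fin.sum_univ_three, kdelta, Fin.ext_iff]
  norm_num
  ring

include hdelta in
lemma nh_L7 (c : ℝ) (i j k l : Fin 3) :
    ∑ p, ∑ q, ∑ r, ∑ s, Q i p * Q j q * Q k r * Q l s * (c * (G q s * kdelta p r))
      = c * ((∑ p, ∑ q, Q j p * Q l q * G p q) * kdelta i k) := by
  rw [hdelta i k]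
  simp only [Fin.sum_univ_three, kdelta, Fin.ext_iff]
  norm_num
  ring

end Contractions

/-- objectivity of the incremental tangent tensor
`A(F)_{ijkl} = D(F)_{ijkl} + σ(F)_{jl} δ_{ik}` and of the Cauchy stress under
rotations. -/
theorem nhA_objective (K μ : ℝ) (F Q : Matrix (Fin 3) (Fin 3) ℝ)
    (hF : 0 < F.det) (hQ : Qᵀ * Q = 1) (hQdet : Q.det = 1) :
    (∀ i j k l : Fin 3,
      nhD K μ (Q * F) i j k l + nhSigma K μ (Q * F) j l * kdelta i k =
        ∑ p, ∑ q, ∑ r, ∑ s, Q i p * Q j q * Q k r * Q l s *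
          (nhD K μ F p q r s + nhSigma K μ F q s * kdelta p r)) ∧
    (∀ k l : Fin 3,
      nhSigma K μ (Q * F) k l = ∑ p, ∑ q, Q k p * Q l q * nhSigma K μ F p q) := by
  have hQQt : Q * Qᵀ = 1 := mul_eq_one_comm.mpr hQ
  have hdelta : ∀ i j : Fin 3, kdelta i j = ∑ p, Q i p * Q j p := by
    intro i j
    have h := congrFun (congrFun hQQt i) j
    simp only [mul_apply, transpose_apply, one_apply] at h
    simp [kdelta, h]
  have hdet : (Q * F).det = F.det := by rw [det_mul, hQdet, one_mul]
  have hbmat : (Q * F) * (Q * F)ᵀ = Q * (F * Fᵀ) * Qᵀ := by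
    rw [transpose_mul]; simp [Matrix.mul_assoc]
  have htrace : ((Q * F) * (Q * F)ᵀ).trace = (F * Fᵀ).trace := by
    rw [hbmat, Matrix.trace_mul_cycle, ← Matrix.mul_assoc, hQ, one_mul]
  have hbentry : ∀ a c : Fin 3, ((Q * F) * (Q * F)ᵀ) a c
      = ∑ p, ∑ q, Q a p * Q c q * (F * Fᵀ) p q := by
    intro a c
    rw [hbmat]
    simp only [mul_apply, transpose_apply, Finset.sum_mul, Finset.mul_sum]
    rw [Finset.sum_comm]
    refine Finset.sum_congr rfl fun p _ => Finset.sum_congr rfl fun q _ => ?_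
    exact Finset.sum_congr rfl fun x _ => by ring
  set J := F.det with hJ
  set T := (F * Fᵀ).trace with hT
  set cμ := μ * F.det ^ (-(5:ℝ)/3) with hcμ
  have hbody : ∀ p q r s : Fin 3,
      nhD K μ F p q r s + nhSigma K μ F q s * kdelta p r =
        (K * (2 * J - 1) + cμ * (2/9) * T) * (kdelta p q * kdelta r s)
        + (-(K * (J - 1)) + cμ * (1/3) * T) * (kdelta p r * kdelta s q)
        + (-(K * (J - 1)) + cμ * (1/3) * T) * (kdelta p s * kdelta q r)
        + (-(cμ * (2/3))) * ((F * Fᵀ) p q * kdelta r s)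
        + (-(cμ * (2/3))) * (kdelta p q * (F * Fᵀ) r s)
        + (K * (J - 1) - cμ * (T/3)) * (kdelta q s * kdelta p r)
        + cμ * ((F * Fᵀ) q s * kdelta p r) := by
    intro p q r s
    simp only [nhD, nhSigma_apply, ← hJ, ← hT, ← hcμ]
    ring
  constructor
  · intro i j k l
    simp only [hbody, mul_add, Finset.sum_add_distrib]
    rw [nh_L1 Q hdelta, nh_L2 Q hdelta, nh_L3 Q hdelta, nh_L6 Q hdelta,
      nh_L4 Q (F * Fᵀ) hdelta, nh_L5 Q (F * Fᵀ) hdelta, nh_L7 Q (F * Fᵀ) hdelta]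
    simp only [nhD, nhSigma_apply, hdet, htrace, hbentry, ← hJ, ← hT, ← hcμ]
    ring
  · intro k l
    simp only [nhSigma_apply, hdet, htrace, hbentry, ← hJ, ← hT, ← hcμ]
    rw [hdelta k l]
    simp only [Fin.sum_univ_three, kdelta, Fin.ext_iff]
    norm_num
    ring
end

section
/- Suppose that for every τ the bilinear form a(τ) is symmetric, ω^{ij}(τ) ∈ W, and the cell-problem condition a(τ)(ω^{ij}(τ) + Π^{ij}(τ), v) = 0 holds for all v ∈ W and each pair (i,j). Set Ξ^{ij}(τ) = ω^{ij}(τ) + Π^{ij}(τ). Then for all pairs (i,j), (k,l), the homogenized coefficient function τ ↦ a(τ)(Ξ^{kl}(τ), Ξ^{ij}(τ)) is differentiable at τ = 0 and its derivative equals a'(0)(Ξ^{kl}(0), Ξ^{ij}(0)) + a(0)((Π^{kl})'(0), Ξ^{ij}(0)) + a(0)(Ξ^{kl}(0), (Π^{ij})'(0)); in particular, the derivatives of the correctors ω^{ij} do not enter the formula. -/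
/-!
Differentiating `a(τ)(Ξ^{kl}(τ), Ξ^{ij}(τ))` by the product rule produces, besides the three terms
of the formula, the terms `a(0)((ω^{kl})'(0), Ξ^{ij}(0))` and `a(0)(Ξ^{kl}(0), (ω^{ij})'(0))`.
Since `ω` takes values in the closed subspace `W`, its derivatives lie in `W` as limits of
difference quotients, so both terms vanish by the cell problems (the first one after using the
symmetry of `a(0)`).
-/

section

variable {𝕜 E F G : Type*} [NontriviallyNormedField 𝕜]
  [NormedAddCommGroup E] [NormedSpace 𝕜 E] [NormedAddCommGroup F] [NormedSpace 𝕜 F]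
  [NormedAddCommGroup G] [NormedSpace 𝕜 G]

-- No differentiability is needed: where `u` is not differentiable, `deriv u t = 0 ∈ V`.
theorem Submodule.deriv_mem_of_forall_mem (V : Submodule 𝕜 E) (hV : IsClosed (V : Set E))
    {u : 𝕜 → E} (hu : ∀ τ, u τ ∈ V) (t : 𝕜) : deriv u t ∈ V := by
  have hspan : (Submodule.span 𝕜 (u '' Set.univ) : Set E) ⊆ V :=
    Submodule.span_le.2 (by rintro _ ⟨τ, -, rfl⟩; exact hu τ)
  exact closure_minimal hspan hV (range_deriv_subset_closure_span_image u dense_univ ⟨t, rfl⟩)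

theorem hasDerivAt_apply_add_apply_add_of_orthogonal (V : Submodule 𝕜 E) (W : Submodule 𝕜 F)
    (hV : IsClosed (V : Set E)) (hW : IsClosed (W : Set F))
    {a : 𝕜 → E →L[𝕜] F →L[𝕜] G} {a' : E →L[𝕜] F →L[𝕜] G} {u p : 𝕜 → E} {v q : 𝕜 → F}
    {p' : E} {q' : F} {t : 𝕜} (ha : HasDerivAt a a' t)
    (hu : DifferentiableAt 𝕜 u t) (hp : HasDerivAt p p' t)
    (hv : DifferentiableAt 𝕜 v t) (hq : HasDerivAt q q' t)
    (huV : ∀ τ, u τ ∈ V) (hvW : ∀ τ, v τ ∈ W)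
    (hleft : ∀ w ∈ W, a t (u t + p t) w = 0) (hright : ∀ z ∈ V, a t z (v t + q t) = 0) :
    HasDerivAt (fun τ => a τ (u τ + p τ) (v τ + q τ))
      (a' (u t + p t) (v t + q t) + a t p' (v t + q t) + a t (u t + p t) q') t := by
  have hprod := (ha.clm_apply (hu.hasDerivAt.add hp)).clm_apply (hv.hasDerivAt.add hq)
  have hu_orth := hright _ (V.deriv_mem_of_forall_mem hV huV t)
  have hv_orth := hleft _ (W.deriv_mem_of_forall_mem hW hvW t)
  refine hprod.congr_deriv ?_
  simp only [Pi.add_apply, add_apply, map_add (a t) (deriv u t) p',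
    map_add (a t (u t + p t)) (deriv v t) q', hu_orth, hv_orth, zero_add]

end

/-- for a differentiable family of symmetric bilinear forms `a(τ)` whose
correctors `ω^{ij}(τ) ∈ W` solve the cell problems
`a(τ)(ω^{ij}(τ) + Π^{ij}(τ), v) = 0` for all `v ∈ W`, the homogenized coefficient
`τ ↦ a(τ)(Ξ^{kl}(τ), Ξ^{ij}(τ))`, with `Ξ^{ij} = ω^{ij} + Π^{ij}`, is differentiable
at `τ = 0` with derivative
`a'(0)(Ξ^{kl}(0), Ξ^{ij}(0)) + a(0)((Π^{kl})'(0), Ξ^{ij}(0)) + a(0)(Ξ^{kl}(0), (Π^{ij})'(0))`;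
the derivatives of the correctors `ω^{ij}` do not enter. -/
theorem homogenized_coeffs_sensitivity {H : Type*} [NormedAddCommGroup H]
    [NormedSpace ℝ H]
    (W : Submodule ℝ H) (hWclosed : IsClosed (W : Set H))
    (a : ℝ → H →L[ℝ] H →L[ℝ] ℝ) (a' : H →L[ℝ] H →L[ℝ] ℝ)
    (ha : HasDerivAt a a' 0)
    (hsymm : ∀ (τ : ℝ) (x y : H), a τ x y = a τ y x)
    (n : ℕ) (P ω : Fin n → Fin n → ℝ → H) (P' : Fin n → Fin n → H)
    (hP : ∀ i j, HasDerivAt (P i j) (P' i j) 0)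
    (hω : ∀ i j, DifferentiableAt ℝ (ω i j) 0)
    (hωW : ∀ i j (τ : ℝ), ω i j τ ∈ W)
    (hcell : ∀ i j (τ : ℝ), ∀ v ∈ W, a τ (ω i j τ + P i j τ) v = 0)
    (i j k l : Fin n) :
    HasDerivAt (fun τ : ℝ => a τ (ω k l τ + P k l τ) (ω i j τ + P i j τ))
      (a' (ω k l 0 + P k l 0) (ω i j 0 + P i j 0)
        + a 0 (P' k l) (ω i j 0 + P i j 0)
        + a 0 (ω k l 0 + P k l 0) (P' i j)) 0 := by
  exact hasDerivAt_apply_add_apply_add_of_orthogonal W W hWclosed hWclosed ha (hω k l) (hP k l)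
    (hω i j) (hP i j) (hωW k l) (hωW i j) (hcell k l 0)
    fun z hz => (hsymm 0 z _).trans (hcell i j 0 z hz)
end

section
/- Define φ_τ(y) = y + τ·V(y), N(τ) = ∫_Y f(τ, φ_τ(y))·det(I + τ·DV(y)) dy and M(τ) = ∫_Y det(I + τ·DV(y)) dy, where DV(y) is the Jacobian matrix of V at y. Then the averaged quantity S(τ) = N(τ)/M(τ) is well defined for τ in a neighborhood of 0 and differentiable at τ = 0, with S'(0) = (1/|Y|)·∫_Y (f(0,y) − S(0))·div V(y) dy + (1/|Y|)·∫_Y (∂_τ f(0,y) + ∇_y f(0,y)·V(y)) dy, where |Y| = M(0) is the Lebesgue measure of Y. -/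
open MeasureTheory

/-- Jacobian matrix `DV(y)` of a map `V : ℝⁿ → ℝⁿ`: `(DV)_{ij} = ∂_j V_i`. -/
noncomputable def jacMat (n : ℕ) (V : (Fin n → ℝ) → (Fin n → ℝ)) (y : Fin n → ℝ) :
    Matrix (Fin n) (Fin n) ℝ :=
  Matrix.of fun i j => fderiv ℝ V y (Pi.single j 1) i

/-- Divergence `div V(y) = Σ_i ∂_i V_i(y)`. -/
noncomputable def divg (n : ℕ) (V : (Fin n → ℝ) → (Fin n → ℝ)) (y : Fin n → ℝ) : ℝ :=
  ∑ i, fderiv ℝ V y (Pi.single i 1) i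

/-- `M(τ) = ∫_Y det(I + τ·DV(y)) dy`. -/
noncomputable def Mfun (n : ℕ) (Y : Set (Fin n → ℝ))
    (V : (Fin n → ℝ) → (Fin n → ℝ)) (τ : ℝ) : ℝ :=
  ∫ y in Y, ((1 : Matrix (Fin n) (Fin n) ℝ) + τ • jacMat n V y).det

/-- `N(τ) = ∫_Y f(τ, y + τ·V(y))·det(I + τ·DV(y)) dy`. -/
noncomputable def Nfun (n : ℕ) (Y : Set (Fin n → ℝ))
    (V : (Fin n → ℝ) → (Fin n → ℝ)) (f : ℝ × (Fin n → ℝ) → ℝ) (τ : ℝ) : ℝ :=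
  ∫ y in Y, f (τ, y + τ • V y) * ((1 : Matrix (Fin n) (Fin n) ℝ) + τ • jacMat n V y).det

/-!
Both `N` and `M` are integrals over the fixed set `Y` of integrands that are jointly continuous
in `(τ, y)` together with their `τ`-derivatives, so on the compact set `[-1, 1] × closure Y` the
derivatives are uniformly bounded and one may differentiate under the integral sign. Since
`d/dτ det (1 + τ A) = tr A` at `τ = 0`, the Jacobian factor contributes `div V`, and `M(0) = |Y|`
is positive, so the quotient rule gives the formula.
-/

open Bornology

namespace Matrix

attribute [local instance] Matrix.normedAddCommGroup Matrix.normedSpace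

variable {𝕜 ι : Type*} [NontriviallyNormedField 𝕜] [Fintype ι] [DecidableEq ι]

theorem contDiff_det {k : WithTop ℕ∞} : ContDiff 𝕜 k (det : Matrix ι ι 𝕜 → 𝕜) := by
  simp_rw [funext det_apply']
  exact ContDiff.sum fun σ _ => contDiff_const.mul <|
    contDiff_prod fun i _ => contDiff_apply_apply 𝕜 𝕜 (σ i) i

theorem eval_det_one_add_X_smul (A : Matrix ι ι 𝕜) (t : 𝕜) :
    (det (1 + (Polynomial.X : Polynomial 𝕜) • A.map Polynomial.C)).eval t = det (1 + t • A) := by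
  rw [← Polynomial.coe_evalRingHom, RingHom.map_det]
  congr 1
  ext i j
  simp only [RingHom.mapMatrix_apply, map_apply, add_apply, smul_apply, one_apply,
    Polynomial.coe_evalRingHom, Polynomial.eval_add, smul_eq_mul, Polynomial.eval_mul,
    Polynomial.eval_X, Polynomial.eval_C]
  split_ifs <;> simp

theorem hasDerivAt_det_one_add_smul_s14 (A : Matrix ι ι 𝕜) :
    HasDerivAt (fun t : 𝕜 => det (1 + t • A)) (trace A) 0 := by
  have h := (det (1 + (Polynomial.X : Polynomial 𝕜) • A.map Polynomial.C)).hasDerivAt 0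
  rw [derivative_det_one_add_X_smul] at h
  simpa only [eval_det_one_add_X_smul] using h

theorem hasDerivAt_det_add_smul (B A : Matrix ι ι 𝕜) (t : 𝕜) :
    HasDerivAt (fun t : 𝕜 => det (B + t • A)) (fderiv 𝕜 det (B + t • A) A) t := by
  have hline : HasDerivAt (fun t : 𝕜 => B + t • A) A t :=
    (((hasDerivAt_id' t).smul_const A).const_add B).congr_deriv (one_smul 𝕜 A)
  exact (contDiff_det.differentiable one_ne_zero _).hasFDerivAt.comp_hasDerivAt t hline

theorem fderiv_det_one (A : Matrix ι ι 𝕜) : fderiv 𝕜 det (1 : Matrix ι ι 𝕜) A = trace A := by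
  have h := (hasDerivAt_det_add_smul 1 A 0).unique (hasDerivAt_det_one_add_smul_s14 A)
  rwa [zero_smul, add_zero] at h

end Matrix

section ParametricIntegral

variable {X G : Type*} [PseudoMetricSpace X] [ProperSpace X] [MeasurableSpace X] [BorelSpace X]
  [NormedAddCommGroup G] {μ : Measure X} [IsFiniteMeasureOnCompacts μ] {s : Set X}

theorem Continuous.integrableOn_of_isBounded {g : X → G} (hg : Continuous g) (hs : IsBounded s) :
    IntegrableOn g s μ :=
  (hg.continuousOn.integrableOn_compact' hs.isCompact_closure
    isClosed_closure.measurableSet).mono_set subset_closure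

theorem hasDerivAt_setIntegral_of_continuous [NormedSpace ℝ G] [CompleteSpace G]
    {F F' : ℝ → X → G} (hs : IsBounded s)
    (hF : Continuous (Function.uncurry F)) (hF' : Continuous (Function.uncurry F'))
    (hderiv : ∀ t y, HasDerivAt (F · y) (F' t y) t) (t₀ : ℝ) :
    HasDerivAt (fun t => ∫ y in s, F t y ∂μ) (∫ y in s, F' t₀ y ∂μ) t₀ := by
  obtain ⟨C, hC⟩ := ((isCompact_closedBall t₀ 1).prod
    hs.isCompact_closure).exists_bound_of_continuousOn hF'.continuousOn
  have hbound : ∀ᵐ y ∂μ.restrict s, ∀ t ∈ Metric.ball t₀ 1, ‖F' t y‖ ≤ C :=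
    ae_restrict_of_ae_restrict_of_subset subset_closure <|
      ae_restrict_of_forall_mem isClosed_closure.measurableSet fun y hy t ht =>
        hC (t, y) ⟨Metric.ball_subset_closedBall ht, hy⟩
  exact (hasDerivAt_integral_of_dominated_loc_of_deriv_le (Metric.ball_mem_nhds t₀ one_pos)
    (.of_forall fun t => (hF.comp (Continuous.prodMk_right t)).aestronglyMeasurable)
    ((hF.comp (Continuous.prodMk_right t₀)).integrableOn_of_isBounded hs)
    (hF'.comp (Continuous.prodMk_right t₀)).aestronglyMeasurable hbound
    (integrableOn_const hs.measure_lt_top.ne) (.of_forall fun y t _ => hderiv t y)).2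

end ParametricIntegral

section ShapeDerivative

attribute [local instance] Matrix.normedAddCommGroup Matrix.normedSpace

variable {n : ℕ} {Y : Set (Fin n → ℝ)} {V : (Fin n → ℝ) → (Fin n → ℝ)}

theorem continuous_jacMat (hV : ContDiff ℝ 1 V) : Continuous (jacMat n V) :=
  continuous_pi fun i => continuous_pi fun _ =>
    (continuous_apply i).comp ((hV.continuous_fderiv one_ne_zero).clm_apply continuous_const)

theorem divg_eq_trace_jacMat (y : Fin n → ℝ) : divg n V y = (jacMat n V y).trace := rfl

theorem continuous_divg (hV : ContDiff ℝ 1 V) : Continuous (divg n V) :=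
  (continuous_jacMat hV).matrix_trace

theorem hasDerivAt_Nfun (hY : IsBounded Y) (hV : ContDiff ℝ 1 V) {f : ℝ × (Fin n → ℝ) → ℝ}
    (hf : ContDiff ℝ 1 f) :
    HasDerivAt (Nfun n Y V f)
      (∫ y in Y, (fderiv ℝ f (0, y) (1, V y) + f (0, y) * divg n V y)) 0 := by
  have hjac := continuous_jacMat hV
  have hdet' := (Matrix.contDiff_det (𝕜 := ℝ) (ι := Fin n) (k := 1)).continuous_fderiv one_ne_zero
  have hderiv (t : ℝ) (y : Fin n → ℝ) :
      HasDerivAt (fun t => f (t, y + t • V y) * (1 + t • jacMat n V y).det)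
        (fderiv ℝ f (t, y + t • V y) (1, V y) * (1 + t • jacMat n V y).det
          + f (t, y + t • V y) * fderiv ℝ Matrix.det (1 + t • jacMat n V y) (jacMat n V y)) t := by
    have hflow : HasDerivAt (fun t : ℝ => (t, y + t • V y)) ((1 : ℝ), V y) t :=
      (hasDerivAt_id' t).prodMk
        ((((hasDerivAt_id' t).smul_const (V y)).const_add y).congr_deriv (one_smul ℝ _))
    exact ((hf.differentiable one_ne_zero _).hasFDerivAt.comp_hasDerivAt t hflow).mul
      (Matrix.hasDerivAt_det_add_smul _ _ t)
  have h := hasDerivAt_setIntegral_of_continuous (μ := volume) hY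
    (F := fun t y => f (t, y + t • V y) * (1 + t • jacMat n V y).det)
    (by fun_prop) (by fun_prop) hderiv 0
  simp only [zero_smul, add_zero, Matrix.det_one, mul_one, Matrix.fderiv_det_one,
    ← divg_eq_trace_jacMat] at h
  exact h

theorem Mfun_eq_Nfun_one : Mfun n Y V = Nfun n Y V fun _ => 1 := by
  ext τ
  simp only [Mfun, Nfun, one_mul]

theorem hasDerivAt_Mfun (hY : IsBounded Y) (hV : ContDiff ℝ 1 V) :
    HasDerivAt (Mfun n Y V) (∫ y in Y, divg n V y) 0 := by
  simpa [Mfun_eq_Nfun_one] using hasDerivAt_Nfun hY hV (contDiff_const (c := (1 : ℝ)))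

theorem Mfun_zero : Mfun n Y V 0 = volume.real Y := by
  simp [Mfun]

end ShapeDerivative

theorem averaged_quantity_shape_sensitivity_general (n : ℕ)
    (Y : Set (Fin n → ℝ))
    (hYbdd : Bornology.IsBounded Y) (hYpos : 0 < volume Y)
    (V : (Fin n → ℝ) → (Fin n → ℝ)) (hV : ContDiff ℝ 1 V)
    (f : ℝ × (Fin n → ℝ) → ℝ) (hf : ContDiff ℝ 1 f) :
    ∃ ε > 0,
      (∀ τ : ℝ, |τ| < ε → Mfun n Y V τ ≠ 0) ∧
      HasDerivAt (fun τ : ℝ => Nfun n Y V f τ / Mfun n Y V τ)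
        ((1 / Mfun n Y V 0) *
            (∫ y in Y, (f (0, y) - Nfun n Y V f 0 / Mfun n Y V 0) * divg n V y)
          + (1 / Mfun n Y V 0) *
            (∫ y in Y, (fderiv ℝ f (0, y) (1, 0) + fderiv ℝ f (0, y) (0, V y)))) 0 := by
  have hM0 : Mfun n Y V 0 ≠ 0 := by
    rw [Mfun_zero]
    exact (ENNReal.toReal_pos hYpos.ne' hYbdd.measure_lt_top.ne).ne'
  have hM := hasDerivAt_Mfun hYbdd hV
  obtain ⟨ε, hε, hMne⟩ := Metric.eventually_nhds_iff.1 (hM.continuousAt.eventually_ne hM0)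
  refine ⟨ε, hε, fun τ hτ => hMne (by rwa [Real.dist_eq, sub_zero]), ?_⟩
  refine ((hasDerivAt_Nfun hYbdd hV hf).div hM hM0).congr_deriv ?_
  have hdiv := continuous_divg hV
  have hdivg : IntegrableOn (divg n V) Y := hdiv.integrableOn_of_isBounded hYbdd
  have hfdivg : IntegrableOn (fun y => f (0, y) * divg n V y) Y :=
    Continuous.integrableOn_of_isBounded (by fun_prop) hYbdd
  have hDf : IntegrableOn (fun y => fderiv ℝ f (0, y) (1, V y)) Y :=
    Continuous.integrableOn_of_isBounded (by fun_prop) hYbdd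
  have hsplit : ∫ y in Y, (fderiv ℝ f (0, y) (1, V y) + f (0, y) * divg n V y) =
      (∫ y in Y, (fderiv ℝ f (0, y) (1, 0) + fderiv ℝ f (0, y) (0, V y))) +
        ∫ y in Y, f (0, y) * divg n V y := by
    simp only [← map_add, Prod.mk_add_mk, add_zero, zero_add]
    exact integral_add hDf hfdivg
  have hcenter (c : ℝ) : ∫ y in Y, (f (0, y) - c) * divg n V y =
      (∫ y in Y, f (0, y) * divg n V y) - c * ∫ y in Y, divg n V y := by
    simp only [sub_mul]
    rw [integral_sub hfdivg (hdivg.const_mul c), integral_const_mul]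
  rw [hsplit, hcenter]
  field_simp
  ring

/-- the transported average `S(τ) = N(τ)/M(τ)` is well defined near
`τ = 0` and differentiable at `τ = 0`, with
`S'(0) = (1/|Y|)·∫_Y (f(0,y) − S(0))·div V dy
       + (1/|Y|)·∫_Y (∂_τ f(0,y) + ∇_y f(0,y)·V(y)) dy`, where `|Y| = M(0)`. -/
theorem averaged_quantity_shape_sensitivity (n : ℕ) (hn : 1 ≤ n)
    (Y : Set (Fin n → ℝ)) (hYmeas : MeasurableSet Y)
    (hYbdd : Bornology.IsBounded Y) (hYpos : 0 < volume Y)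
    (V : (Fin n → ℝ) → (Fin n → ℝ)) (hV : ContDiff ℝ 1 V)
    (f : ℝ × (Fin n → ℝ) → ℝ) (hf : ContDiff ℝ 1 f) :
    ∃ ε > 0,
      (∀ τ : ℝ, |τ| < ε → Mfun n Y V τ ≠ 0) ∧
      HasDerivAt (fun τ : ℝ => Nfun n Y V f τ / Mfun n Y V τ)
        ((1 / Mfun n Y V 0) *
            (∫ y in Y, (f (0, y) - Nfun n Y V f 0 / Mfun n Y V 0) * divg n V y)
          + (1 / Mfun n Y V 0) *
            (∫ y in Y, (fderiv ℝ f (0, y) (1, 0) + fderiv ℝ f (0, y) (0, V y)))) 0 :=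
  averaged_quantity_shape_sensitivity_general n Y hYbdd hYpos V hV f hf
end
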